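/- Let k be a positive integer that is not a power of 2, and let c : Fin 3 → ℕ → ℕ be a counting array of a solution, i.e., c is finitely supported and ∑_{a<3, b} (c a b : ℚ)/(2^a * k^b) = 1. Let β be the largest b such that c a b ≠ 0 for some a, and suppose β ≥ 1 (i.e., the solution is nontrivial). Then there exists a counting array c' of a solution (finitely supported, ∑_{a<3, b} (c' a b : ℚ)/(2^a * k^b) = 1) with total number of terms ∑_{a,b} c' a b ≤ ∑_{a,b} c a b, with β again the largest b such that c' a b ≠ 0 for some a, and with row β of c' equal to one of the following triples (c' 0 β, c' 1 β, c' 2 β): if k ≡ 0 (mod 4): (k/4, 0, 0); if k ≡ 1 (mod 4): (k, 0, 0), ((k-1)/4, 0, 1), ((k-1)/2, 1, 0), or ((3k-3)/4, 1, 1); if k ≡ 2 (mod 4): (k/2, 0, 0) or ((k-2)/4, 1, 0); if k ≡ 3 (mod 4): (k, 0, 0), ((3k-1)/4, 0, 1), ((k-1)/2, 1, 0), or ((k-3)/4, 1, 1). -/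

import Mathlib

/-!
Write `w = 4 x₀ + 2 x₁ + x₂` for the weight of a row `x`, so that row `b` contributes
`w / (4 k ^ b)`. Clearing denominators shows that the weight `N = m k` of the top row is a
multiple of `k`. Split `m = m₀ + j` with `1 ≤ m₀ ≤ 4 / gcd(4, k)` and `4 ∣ j k`: keep weight
`m₀ k` in the top row, written in binary, and carry weight `j` one row down, also in binary.
Since `4 ∣ j k`, writing the top row in binary saves `j k / 4` terms, which pays for the `j`
carried terms, and the few possible values of `m₀ k` give exactly the listed rows.
-/

open Finset

def rowWeight (x : Fin 3 → ℕ) : ℕ := 4 * x 0 + 2 * x 1 + x 2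

def binRow (n : ℕ) : Fin 3 → ℕ := ![n / 4, n % 4 / 2, n % 2]

lemma rowWeight_add (x y : Fin 3 → ℕ) : rowWeight (x + y) = rowWeight x + rowWeight y := by
  simp only [rowWeight, Pi.add_apply]
  ring

lemma rowWeight_pos_iff {x : Fin 3 → ℕ} : 0 < rowWeight x ↔ ∃ a, x a ≠ 0 := by
  rw [Fin.exists_fin_succ, Fin.exists_fin_two, rowWeight]
  simp only [Fin.succ_zero_eq_one, Fin.succ_one_eq_two]
  omega

lemma rowWeight_binRow (n : ℕ) : rowWeight (binRow n) = n := by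
  simp [rowWeight, binRow]
  omega

lemma sum_binRow (n : ℕ) : ∑ a, binRow n a = n / 4 + n % 4 / 2 + n % 2 := by
  simp [binRow, Fin.sum_univ_three]

lemma sum_binRow_rowWeight_le (x : Fin 3 → ℕ) : ∑ a, binRow (rowWeight x) a ≤ ∑ a, x a := by
  rw [sum_binRow, Fin.sum_univ_three, rowWeight]
  omega

lemma sum_binRow_add_of_four_dvd (M : ℕ) {J : ℕ} (hJ : 4 ∣ J) :
    ∑ a, binRow (M + J) a = ∑ a, binRow M a + J / 4 := by
  simp only [sum_binRow]
  omega

lemma sum_binRow_le_of_four_dvd_mul {j k : ℕ} (hk : 0 < k) (h : 4 ∣ j * k) :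
    ∑ a, binRow j a ≤ j * k / 4 := by
  rw [sum_binRow]
  rcases lt_or_ge k 4 with hk4 | hk4
  · interval_cases k <;> omega
  · have : 4 * j ≤ j * k := by nlinarith
    omega

lemma sum_binRow_add_sum_binRow_le {k M j : ℕ} {x : Fin 3 → ℕ} (hk : 0 < k)
    (h4 : 4 ∣ j * k) (hx : M + j * k = rowWeight x) :
    ∑ a, binRow M a + ∑ a, binRow j a ≤ ∑ a, x a :=
  calc ∑ a, binRow M a + ∑ a, binRow j a ≤ ∑ a, binRow M a + j * k / 4 := by
        gcongr
        exact sum_binRow_le_of_four_dvd_mul hk h4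
    _ = ∑ a, binRow (rowWeight x) a := by rw [← hx, sum_binRow_add_of_four_dvd M h4]
    _ ≤ ∑ a, x a := sum_binRow_rowWeight_le x

lemma exists_small_add_eq_with_four_dvd_mul (k : ℕ) {m : ℕ} (hm : 0 < m) :
    ∃ m₀ j, 0 < m₀ ∧ m₀ * Nat.gcd 4 k ≤ 4 ∧ 4 ∣ j * k ∧ m₀ + j = m := by
  set q := 4 / Nat.gcd 4 k
  have hq : q * Nat.gcd 4 k = 4 := Nat.div_mul_cancel (Nat.gcd_dvd_left 4 k)
  have hq0 : 0 < q := Nat.pos_of_ne_zero fun h => by simp [h] at hq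
  refine ⟨(m - 1) % q + 1, q * ((m - 1) / q), Nat.succ_pos _, ?_, ?_, ?_⟩
  · calc ((m - 1) % q + 1) * Nat.gcd 4 k ≤ q * Nat.gcd 4 k :=
          Nat.mul_le_mul_right _ (Nat.mod_lt _ hq0)
      _ = 4 := hq
  · rw [← hq, mul_right_comm]
    exact (mul_dvd_mul_left q (Nat.gcd_dvd_right 4 k)).trans (dvd_mul_right _ _)
  · have := Nat.mod_add_div (m - 1) q
    omega

def IsOneReductionRow (k : ℕ) (x : Fin 3 → ℕ) : Prop :=
  (k % 4 = 0 ∧ (x 0, x 1, x 2) = (k / 4, 0, 0)) ∨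
    (k % 4 = 1 ∧
      ((x 0, x 1, x 2) = (k, 0, 0) ∨ (x 0, x 1, x 2) = ((k - 1) / 4, 0, 1) ∨
        (x 0, x 1, x 2) = ((k - 1) / 2, 1, 0) ∨ (x 0, x 1, x 2) = ((3 * k - 3) / 4, 1, 1))) ∨
    (k % 4 = 2 ∧ ((x 0, x 1, x 2) = (k / 2, 0, 0) ∨ (x 0, x 1, x 2) = ((k - 2) / 4, 1, 0))) ∨
    (k % 4 = 3 ∧
      ((x 0, x 1, x 2) = (k, 0, 0) ∨ (x 0, x 1, x 2) = ((3 * k - 1) / 4, 0, 1) ∨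
        (x 0, x 1, x 2) = ((k - 1) / 2, 1, 0) ∨ (x 0, x 1, x 2) = ((k - 3) / 4, 1, 1)))

lemma isOneReductionRow_binRow_mul {k m : ℕ} (hm : 0 < m) (hmk : m * Nat.gcd 4 k ≤ 4) :
    IsOneReductionRow k (binRow (m * k)) := by
  have hg : Nat.gcd 4 k = Nat.gcd (k % 4) 4 := Nat.gcd_rec 4 k
  obtain h | h | h | h : k % 4 = 0 ∨ k % 4 = 1 ∨ k % 4 = 2 ∨ k % 4 = 3 := by omega
  all_goals
    rw [h] at hg
    norm_num at hg
    rw [hg] at hmk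
    have : m ≤ 4 := by omega
    interval_cases m <;> simp [IsOneReductionRow, binRow, h] <;> omega

def carryDown (c : Fin 3 → ℕ → ℕ) (γ M j : ℕ) : Fin 3 → ℕ → ℕ := fun a b =>
  if b = γ + 1 then binRow M a else if b = γ then c a γ + binRow j a else c a b

section carryDown

variable {c : Fin 3 → ℕ → ℕ} {γ M j : ℕ}

lemma carryDown_top_row : (carryDown c γ M j · (γ + 1)) = binRow M := by
  funext a
  simp [carryDown]

lemma carryDown_eq_zero (h : ∀ a b, γ + 2 ≤ b → c a b = 0) (a : Fin 3) (b : ℕ)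
    (hb : γ + 2 ≤ b) : carryDown c γ M j a b = 0 := by
  simp only [carryDown, if_neg (show b ≠ γ + 1 by omega), if_neg (show b ≠ γ by omega)]
  exact h a b hb

lemma sum_range_carryDown {A : Type*} [AddCommMonoid A] (F : ℕ → (Fin 3 → ℕ) → A) :
    ∑ b ∈ range (γ + 2), F b (carryDown c γ M j · b) =
      ∑ b ∈ range γ, F b (c · b) + F γ ((c · γ) + binRow j) + F (γ + 1) (binRow M) := by
  rw [sum_range_succ, sum_range_succ, carryDown_top_row]
  congr 2
  · refine sum_congr rfl fun b hb => ?_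
    have hb := mem_range.mp hb
    congr 1
    funext a
    simp [carryDown, hb.ne, show b ≠ γ + 1 by omega]
  · congr 1
    funext a
    simp [carryDown]

lemma sum_rowWeight_div_carryDown {k : ℕ} (hk : k ≠ 0)
    (h : M + j * k = rowWeight (c · (γ + 1))) :
    ∑ b ∈ range (γ + 2), (rowWeight (carryDown c γ M j · b) : ℚ) / (4 * k ^ b) =
      ∑ b ∈ range (γ + 2), (rowWeight (c · b) : ℚ) / (4 * k ^ b) := by
  rw [sum_range_carryDown (fun b x => (rowWeight x : ℚ) / (4 * k ^ b)), sum_range_succ,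
    sum_range_succ, ← h, rowWeight_add, rowWeight_binRow, rowWeight_binRow]
  push_cast
  field_simp
  ring

lemma sum_carryDown_le {k : ℕ} (hk : 0 < k) (h4 : 4 ∣ j * k)
    (h : M + j * k = rowWeight (c · (γ + 1))) :
    ∑ b ∈ range (γ + 2), ∑ a, carryDown c γ M j a b ≤ ∑ b ∈ range (γ + 2), ∑ a, c a b := by
  rw [sum_range_carryDown (fun _ x => ∑ a, x a), sum_range_succ, sum_range_succ]
  simp only [Pi.add_apply, sum_add_distrib]
  have := sum_binRow_add_sum_binRow_le hk h4 h
  omega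

end carryDown

lemma finsum_finsum_eq_sum_range {ι A : Type*} [Fintype ι] [AddCommMonoid A] {f : ι → ℕ → A}
    {n : ℕ} (h : ∀ i b, n ≤ b → f i b = 0) :
    ∑ᶠ (i : ι) (b : ℕ), f i b = ∑ b ∈ range n, ∑ i, f i b := by
  rw [finsum_eq_sum_of_fintype, sum_comm]
  refine sum_congr rfl fun i _ => finsum_eq_sum_of_support_subset _ fun b hb => ?_
  simp only [coe_range, Set.mem_Iio]
  by_contra hbn
  exact hb (h i b (by omega))

lemma finite_setOf_ne_zero {ι : Type*} [Finite ι] {c : ι → ℕ → ℕ} {n : ℕ}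
    (h : ∀ a b, n ≤ b → c a b = 0) : {p : ι × ℕ | c p.1 p.2 ≠ 0}.Finite :=
  (Set.finite_univ.prod (Set.finite_Iio n)).subset fun ⟨a, b⟩ hp =>
    ⟨Set.mem_univ a, by by_contra hb; exact hp (h a b (not_lt.mp hb))⟩

lemma finsum_div_eq_sum_rowWeight (k : ℕ) {c : Fin 3 → ℕ → ℕ} {n : ℕ}
    (h : ∀ a b, n ≤ b → c a b = 0) :
    ∑ᶠ (a : Fin 3) (b : ℕ), (c a b : ℚ) / (2 ^ (a : ℕ) * (k : ℚ) ^ b) =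
      ∑ b ∈ range n, (rowWeight (c · b) : ℚ) / (4 * k ^ b) := by
  rw [finsum_finsum_eq_sum_range fun a b hb => by simp [h a b hb]]
  refine sum_congr rfl fun b _ => ?_
  simp only [Fin.sum_univ_three, rowWeight]
  push_cast
  simp only [Fin.val_zero, Fin.val_one, Fin.val_two]
  ring

lemma dvd_of_sum_range_div_eq_one {k n : ℕ} (hk : 0 < k) (w : ℕ → ℕ)
    (h : ∑ b ∈ range (n + 2), (w b : ℚ) / (4 * k ^ b) = 1) : k ∣ w (n + 1) := by
  have hcleared : ∑ b ∈ range (n + 1), w b * k ^ (n + 1 - b) + w (n + 1) = 4 * k ^ (n + 1) := by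
    have : ∑ b ∈ range (n + 2), (w b : ℚ) * k ^ (n + 1 - b) = 4 * k ^ (n + 1) := by
      rw [← one_mul (4 * (k : ℚ) ^ (n + 1)), ← h, sum_mul]
      refine sum_congr rfl fun b hb => ?_
      rw [← pow_sub_mul_pow (k : ℚ) (Nat.lt_succ_iff.mp (mem_range.mp hb))]
      field_simp
    rw [sum_range_succ, Nat.sub_self, pow_zero, mul_one] at this
    exact_mod_cast this
  refine (Nat.dvd_add_right (dvd_sum fun b hb => ?_)).mp
    (hcleared ▸ dvd_mul_of_dvd_right (dvd_pow_self k n.succ_ne_zero) 4)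
  exact dvd_mul_of_dvd_right (dvd_pow_self k (by have := mem_range.mp hb; omega)) _

theorem exists_one_reduction_solution_general (k : ℕ) (hk : 0 < k)
    (c : Fin 3 → ℕ → ℕ)
    (hsum : ∑ᶠ (a : Fin 3) (b : ℕ), (c a b : ℚ) / (2 ^ (a : ℕ) * (k : ℚ) ^ b) = 1)
    (β : ℕ) (hβtop : ∃ a, c a β ≠ 0) (hβmax : ∀ b, (∃ a, c a b ≠ 0) → b ≤ β)
    (hβ1 : 1 ≤ β) :
    ∃ c' : Fin 3 → ℕ → ℕ,
      {p : Fin 3 × ℕ | c' p.1 p.2 ≠ 0}.Finite ∧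
      (∑ᶠ (a : Fin 3) (b : ℕ), (c' a b : ℚ) / (2 ^ (a : ℕ) * (k : ℚ) ^ b)) = 1 ∧
      (∑ᶠ (a : Fin 3) (b : ℕ), c' a b) ≤ (∑ᶠ (a : Fin 3) (b : ℕ), c a b) ∧
      (∃ a, c' a β ≠ 0) ∧ (∀ b, (∃ a, c' a b ≠ 0) → b ≤ β) ∧
      ((k % 4 = 0 ∧ (c' 0 β, c' 1 β, c' 2 β) = (k / 4, 0, 0)) ∨
        (k % 4 = 1 ∧
          ((c' 0 β, c' 1 β, c' 2 β) = (k, 0, 0) ∨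
            (c' 0 β, c' 1 β, c' 2 β) = ((k - 1) / 4, 0, 1) ∨
            (c' 0 β, c' 1 β, c' 2 β) = ((k - 1) / 2, 1, 0) ∨
            (c' 0 β, c' 1 β, c' 2 β) = ((3 * k - 3) / 4, 1, 1))) ∨
        (k % 4 = 2 ∧
          ((c' 0 β, c' 1 β, c' 2 β) = (k / 2, 0, 0) ∨
            (c' 0 β, c' 1 β, c' 2 β) = ((k - 2) / 4, 1, 0))) ∨
        (k % 4 = 3 ∧
          ((c' 0 β, c' 1 β, c' 2 β) = (k, 0, 0) ∨
            (c' 0 β, c' 1 β, c' 2 β) = ((3 * k - 1) / 4, 0, 1) ∨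
            (c' 0 β, c' 1 β, c' 2 β) = ((k - 1) / 2, 1, 0) ∨
            (c' 0 β, c' 1 β, c' 2 β) = ((k - 3) / 4, 1, 1)))) := by
  obtain ⟨γ, rfl⟩ : ∃ γ, β = γ + 1 := ⟨β - 1, by omega⟩
  have hzero : ∀ a b, γ + 2 ≤ b → c a b = 0 := fun a b hb => by
    by_contra h
    have := hβmax b ⟨a, h⟩
    omega
  rw [finsum_div_eq_sum_rowWeight k hzero] at hsum
  obtain ⟨m, hm⟩ := dvd_of_sum_range_div_eq_one hk _ hsum
  have hm0 : 0 < m := Nat.pos_of_mul_pos_left (hm ▸ rowWeight_pos_iff.mpr hβtop)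
  obtain ⟨m₀, j, hm₀, hm₀k, h4, rfl⟩ := exists_small_add_eq_with_four_dvd_mul k hm0
  have hM : m₀ * k + j * k = rowWeight (c · (γ + 1)) := by rw [hm]; ring
  have hzero' := carryDown_eq_zero (M := m₀ * k) (j := j) hzero
  have htop := carryDown_top_row (c := c) (γ := γ) (M := m₀ * k) (j := j)
  refine ⟨carryDown c γ (m₀ * k) j, finite_setOf_ne_zero hzero', ?_, ?_, ?_, ?_, ?_⟩
  · rw [finsum_div_eq_sum_rowWeight k hzero', sum_rowWeight_div_carryDown hk.ne' hM, hsum]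
  · rw [finsum_finsum_eq_sum_range hzero', finsum_finsum_eq_sum_range hzero]
    exact sum_carryDown_le hk h4 hM
  · refine rowWeight_pos_iff.mp ?_
    rw [htop, rowWeight_binRow]
    positivity
  · rintro b ⟨a, ha⟩
    by_contra hb
    exact ha (hzero' a b (by omega))
  · have := isOneReductionRow_binRow_mul (k := k) hm₀ hm₀k
    rw [← htop] at this
    exact this

/-- Lemma 4.4: for `k` not a power of 2 and a nontrivial solution with counting
array `c` and top nonzero row index `β ≥ 1`, there is a solution with counting
array `c'`, with no more terms, whose top nonzero row is again indexed by `β` and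
equals one of the minimal rows that reduce to zero under a single application of
one of Moves 2–5. -/
theorem exists_one_reduction_solution (k : ℕ) (hk : 0 < k)
    (hk2 : ¬ ∃ m : ℕ, k = 2 ^ m)
    (c : Fin 3 → ℕ → ℕ)
    (hfin : {p : Fin 3 × ℕ | c p.1 p.2 ≠ 0}.Finite)
    (hsum : ∑ᶠ (a : Fin 3) (b : ℕ), (c a b : ℚ) / (2 ^ (a : ℕ) * (k : ℚ) ^ b) = 1)
    (β : ℕ) (hβtop : ∃ a, c a β ≠ 0) (hβmax : ∀ b, (∃ a, c a b ≠ 0) → b ≤ β)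
    (hβ1 : 1 ≤ β) :
    ∃ c' : Fin 3 → ℕ → ℕ,
      {p : Fin 3 × ℕ | c' p.1 p.2 ≠ 0}.Finite ∧
      (∑ᶠ (a : Fin 3) (b : ℕ), (c' a b : ℚ) / (2 ^ (a : ℕ) * (k : ℚ) ^ b)) = 1 ∧
      (∑ᶠ (a : Fin 3) (b : ℕ), c' a b) ≤ (∑ᶠ (a : Fin 3) (b : ℕ), c a b) ∧
      (∃ a, c' a β ≠ 0) ∧ (∀ b, (∃ a, c' a b ≠ 0) → b ≤ β) ∧
      ((k % 4 = 0 ∧ (c' 0 β, c' 1 β, c' 2 β) = (k / 4, 0, 0)) ∨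
        (k % 4 = 1 ∧
          ((c' 0 β, c' 1 β, c' 2 β) = (k, 0, 0) ∨
            (c' 0 β, c' 1 β, c' 2 β) = ((k - 1) / 4, 0, 1) ∨
            (c' 0 β, c' 1 β, c' 2 β) = ((k - 1) / 2, 1, 0) ∨
            (c' 0 β, c' 1 β, c' 2 β) = ((3 * k - 3) / 4, 1, 1))) ∨
        (k % 4 = 2 ∧
          ((c' 0 β, c' 1 β, c' 2 β) = (k / 2, 0, 0) ∨
            (c' 0 β, c' 1 β, c' 2 β) = ((k - 2) / 4, 1, 0))) ∨
        (k % 4 = 3 ∧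
          ((c' 0 β, c' 1 β, c' 2 β) = (k, 0, 0) ∨
            (c' 0 β, c' 1 β, c' 2 β) = ((3 * k - 1) / 4, 0, 1) ∨
            (c' 0 β, c' 1 β, c' 2 β) = ((k - 1) / 2, 1, 0) ∨
            (c' 0 β, c' 1 β, c' 2 β) = ((k - 3) / 4, 1, 1)))) :=
  exists_one_reduction_solution_general k hk c hsum β hβtop hβmax hβ1
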